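/- Let f be continuous on [0,1]³ satisfying the strict mixed-difference conditions, and let (p,λ) be an optimal projection cycle-vector for f on a finite grid S = S_x × S_y × S_z with {0,1} ⊂ S_x ∩ S_y ∩ S_z. Then both (0,0,0) and (1,1,1) belong to p and both carry positive weights. -/

import Mathlib

open Set Finset

/-- Two points of `ℝ³` are well-ordered if one dominates the other coordinatewise. -/
def WellOrdered3 (a b : ℝ × ℝ × ℝ) : Prop :=
  (a.1 ≤ b.1 ∧ a.2.1 ≤ b.2.1 ∧ a.2.2 ≤ b.2.2) ∨
  (b.1 ≤ a.1 ∧ b.2.1 ≤ a.2.1 ∧ b.2.2 ≤ a.2.2)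

/-- All second mixed differences of `f` (with positive increments, inside the unit
cube) in any two distinct variables are strictly positive. -/
def StrictMixed (f : ℝ → ℝ → ℝ → ℝ) : Prop :=
  (∀ u u' v v' w, u ∈ Set.Icc (0:ℝ) 1 → u' ∈ Set.Icc (0:ℝ) 1 → v ∈ Set.Icc (0:ℝ) 1 →
    v' ∈ Set.Icc (0:ℝ) 1 → w ∈ Set.Icc (0:ℝ) 1 → u < u' → v < v' →
    0 < f u' v' w - f u' v w - f u v' w + f u v w) ∧
  (∀ u u' w w' v, u ∈ Set.Icc (0:ℝ) 1 → u' ∈ Set.Icc (0:ℝ) 1 → w ∈ Set.Icc (0:ℝ) 1 →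
    w' ∈ Set.Icc (0:ℝ) 1 → v ∈ Set.Icc (0:ℝ) 1 → u < u' → w < w' →
    0 < f u' v w' - f u' v w - f u v w' + f u v w) ∧
  (∀ v v' w w' u, v ∈ Set.Icc (0:ℝ) 1 → v' ∈ Set.Icc (0:ℝ) 1 → w ∈ Set.Icc (0:ℝ) 1 →
    w' ∈ Set.Icc (0:ℝ) 1 → u ∈ Set.Icc (0:ℝ) 1 → v < v' → w < w' →
    0 < f u v' w' - f u v' w - f u v w' + f u v w)

/-- A projection cycle-vector in `ℝ³`: finitely many pairwise distinct points with
nonzero weights, the sums of the weights over every plane `x = ξ`, `y = ξ`, `z = ξ`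
being zero. -/
def IsPCV (m : ℕ) (x : Fin m → ℝ × ℝ × ℝ) (lam : Fin m → ℝ) : Prop :=
  Function.Injective x ∧ (∀ i, lam i ≠ 0) ∧
  (∀ ξ : ℝ, ∑ i, (if (x i).1 = ξ then lam i else 0) = 0) ∧
  (∀ ξ : ℝ, ∑ i, (if (x i).2.1 = ξ then lam i else 0) = 0) ∧
  (∀ ξ : ℝ, ∑ i, (if (x i).2.2 = ξ then lam i else 0) = 0)

/-- The normalized weighted sum `Σ λᵢ f(xᵢ) / Σ |λᵢ|`. -/
noncomputable def pcvRatio (m : ℕ) (x : Fin m → ℝ × ℝ × ℝ) (lam : Fin m → ℝ)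
    (f : ℝ → ℝ → ℝ → ℝ) : ℝ :=
  (∑ i, lam i * f (x i).1 (x i).2.1 (x i).2.2) / (∑ i, |lam i|)

/-- All points lie in the grid `Sx × Sy × Sz`. -/
def PointsIn (m : ℕ) (x : Fin m → ℝ × ℝ × ℝ) (Sx Sy Sz : Finset ℝ) : Prop :=
  ∀ i, (x i).1 ∈ Sx ∧ (x i).2.1 ∈ Sy ∧ (x i).2.2 ∈ Sz

/-- `(p,λ)` is an optimal projection cycle-vector for `f` on the grid `Sx × Sy × Sz`:
it maximizes `Σ λᵢ f(xᵢ)/Σ|λᵢ|` among all projection cycle-vectors with points in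
the grid. -/
def OptimalPCV (Sx Sy Sz : Finset ℝ) (f : ℝ → ℝ → ℝ → ℝ)
    (m : ℕ) (x : Fin m → ℝ × ℝ × ℝ) (lam : Fin m → ℝ) : Prop :=
  IsPCV m x lam ∧ PointsIn m x Sx Sy Sz ∧
  ∀ (m' : ℕ) (x' : Fin m' → ℝ × ℝ × ℝ) (lam' : Fin m' → ℝ),
    IsPCV m' x' lam' → PointsIn m' x' Sx Sy Sz →
    pcvRatio m' x' lam' f ≤ pcvRatio m x lam f

/-!
View the optimal cycle-vector as a weight function `L` on the grid `G = Sx ×ˢ Sy ×ˢ Sz`. For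
incomparable `a, b ∈ G` the *exchange* `δ(a ⊓ b) + δ(a ⊔ b) - δa - δb` has zero plane sums and, by
strict supermodularity of `f` (a consequence of the mixed-difference conditions), positive value
`Σ ν f`. Already this shows that the optimal ratio is positive. Adding `ε` times an exchange to `L`
therefore must increase `Σ |L|`, which rules out any exchange in which two of the four weights
shrink by `ε`.

Exchanging two points of positive weight shows that the positive points form a chain; let `p` be
the least one. Every plane through a support point contains a positive point, so `p` lies below the
whole support. If a coordinate of `p` were positive, take a point `q` of negative weight in the
plane through `p` normal to that coordinate, and let `r` be `q` with that coordinate set to `0`: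
then `p ⊔ r = q`, and exchanging `p` and `r` shrinks the weights at `p` and `q`. Hence `p = 0`.
Reflecting the cube through its centre turns `(1,1,1)` into `(0,0,0)`.
-/

section FiberSums

variable {α β : Type*} [DecidableEq β] {G : Finset α}

def FiberSumsVanish (G : Finset α) (π : α → β) (w : α → ℝ) : Prop :=
  ∀ ξ, ∑ p ∈ G with π p = ξ, w p = 0

theorem FiberSumsVanish.add_smul {π : α → β} {w ν : α → ℝ} (hw : FiberSumsVanish G π w)
    (hν : FiberSumsVanish G π ν) (c : ℝ) : FiberSumsVanish G π (w + c • ν) := fun ξ => by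
  simp only [Pi.add_apply, Pi.smul_apply, smul_eq_mul, sum_add_distrib, ← mul_sum, hw ξ, hν ξ,
    mul_zero, add_zero]

theorem FiberSumsVanish.exists_pos {π : α → β} {w : α → ℝ} (hw : FiberSumsVanish G π w) {p : α}
    (hp : p ∈ G) (hwp : w p ≠ 0) : ∃ q ∈ G, π q = π p ∧ 0 < w q := by
  obtain ⟨q, hq, hpos⟩ := exists_pos_of_sum_zero_of_exists_nonzero w (hw (π p))
    ⟨p, mem_filter.2 ⟨hp, rfl⟩, hwp⟩
  exact ⟨q, (mem_filter.1 hq).1, (mem_filter.1 hq).2, hpos⟩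

theorem FiberSumsVanish.exists_neg {π : α → β} {w : α → ℝ} (hw : FiberSumsVanish G π w) {p : α}
    (hp : p ∈ G) (hwp : w p ≠ 0) : ∃ q ∈ G, π q = π p ∧ w q < 0 := by
  have hneg : FiberSumsVanish G π (-w) := fun ξ => by simp [sum_neg_distrib, hw ξ]
  obtain ⟨q, hq, hπ, hpos⟩ := hneg.exists_pos hp (neg_ne_zero.2 hwp)
  exact ⟨q, hq, hπ, neg_pos.1 hpos⟩

end FiberSums

section PiSingle

variable {α : Type*} [DecidableEq α] {G : Finset α}

theorem sum_abs_add_single_le (g : α → ℝ) (a : α) (s : ℝ) :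
    ∑ p ∈ G, |(g + Pi.single a s : α → ℝ) p| ≤ ∑ p ∈ G, |g p| + |s| := by
  calc ∑ p ∈ G, |(g + Pi.single a s : α → ℝ) p|
      ≤ ∑ p ∈ G, (|g p| + (Pi.single a |s| : α → ℝ) p) := by
        refine sum_le_sum fun p _ => (abs_add_le _ _).trans_eq ?_
        rw [Pi.apply_single (fun _ => abs) (fun _ => abs_zero)]
    _ ≤ ∑ p ∈ G, |g p| + |s| := by
        rw [sum_add_distrib, sum_pi_single']
        split_ifs <;> simp

theorem sum_abs_add_single_of_neg_mem_uIcc {g : α → ℝ} {c : α} {s : ℝ} (hc : c ∈ G)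
    (hs : -s ∈ Set.uIcc 0 (g c)) :
    ∑ p ∈ G, |(g + Pi.single c s : α → ℝ) p| = ∑ p ∈ G, |g p| - |s| := by
  have hshrink : |g c + s| = |g c| - |s| := by
    rcases Set.mem_uIcc.1 hs with ⟨h0, h⟩ | ⟨h, h0⟩
    · rw [abs_of_nonneg (by linarith), abs_of_nonneg (by linarith), abs_of_nonpos (by linarith)]
      ring
    · rw [abs_of_nonpos (by linarith), abs_of_nonpos (by linarith), abs_of_nonneg (by linarith)]
      ring
  have hpt : ∀ p ∈ G, |(g + Pi.single c s : α → ℝ) p| =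
      |g p| + (Pi.single c (|g c + s| - |g c|) : α → ℝ) p := by
    intro p _
    rcases eq_or_ne p c with rfl | hpc
    · simp only [Pi.add_apply, Pi.single_eq_same, hshrink]
      ring
    · simp [hpc]
  rw [sum_congr rfl hpt, sum_add_distrib, sum_pi_single', if_pos hc, hshrink]
  ring

end PiSingle

section Lattice

variable {α : Type*} [Lattice α] [DecidableEq α] {G : Finset α}

def exchange (a b : α) : α → ℝ :=
  Pi.single (a ⊓ b) 1 + Pi.single (a ⊔ b) 1 - Pi.single a 1 - Pi.single b 1

theorem sum_exchange_mul (F : α → ℝ) {a b : α} (ha : a ∈ G) (hb : b ∈ G) (hinf : a ⊓ b ∈ G)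
    (hsup : a ⊔ b ∈ G) :
    ∑ p ∈ G, exchange a b p * F p = F (a ⊓ b) + F (a ⊔ b) - F a - F b := by
  simp [exchange, add_mul, sub_mul, sum_add_distrib, sum_sub_distrib, Pi.single_apply, ha, hb,
    hinf, hsup]

theorem fiberSumsVanish_exchange {β : Type*} [LinearOrder β] {π : α → β}
    (hπinf : ∀ a b, π (a ⊓ b) = π a ⊓ π b) (hπsup : ∀ a b, π (a ⊔ b) = π a ⊔ π b) {a b : α}
    (ha : a ∈ G) (hb : b ∈ G) (hinf : a ⊓ b ∈ G) (hsup : a ⊔ b ∈ G) :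
    FiberSumsVanish G π (exchange a b) := fun ξ => by
  simp only [exchange, Pi.add_apply, Pi.sub_apply, sum_add_distrib, sum_sub_distrib,
    sum_pi_single', mem_filter, ha, hb, hinf, hsup, true_and, hπinf, hπsup]
  rcases le_total (π a) (π b) with h | h
  · simp [inf_eq_left.2 h, sup_eq_right.2 h]
  · simp [inf_eq_right.2 h, sup_eq_left.2 h]

theorem sum_abs_add_smul_exchange_le {L : α → ℝ} {a b : α} {ε : ℝ} (ha : a ∈ G) (hb : b ∈ G)
    (hsup : a ⊔ b ∈ G) (hba : ¬b ≤ a) (hε : 0 ≤ ε) (hεa : ε ≤ L a)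
    (hshrink : ε ≤ L b ∨ L (a ⊔ b) ≤ -ε) :
    ∑ p ∈ G, |(L + ε • exchange a b) p| ≤ ∑ p ∈ G, |L p| := by
  set L₁ : α → ℝ := L + Pi.single a (-ε)
  have hL₁ : ∑ p ∈ G, |L₁ p| = ∑ p ∈ G, |L p| - ε := by
    rw [sum_abs_add_single_of_neg_mem_uIcc ha (by simp [Set.mem_uIcc, hε, hεa]), abs_neg,
      abs_of_nonneg hε]
  -- Besides `a`, the weight at `c` shrinks by `ε`; those at `a ⊓ b` and `d` grow by at most `ε`.
  obtain ⟨c, s, d, t, hc, hs, hs_abs, ht_abs, hL⟩ : ∃ c s d t, c ∈ G ∧ -s ∈ Set.uIcc 0 (L₁ c) ∧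
      |s| = ε ∧ |t| = ε ∧
      L + ε • exchange a b = L₁ + Pi.single c s + Pi.single (a ⊓ b) ε + Pi.single d t := by
    have hba' : b ≠ a := fun h => hba h.le
    have hsupa : a ⊔ b ≠ a := fun h => hba (sup_eq_left.1 h)
    rcases hshrink with hb' | hsup'
    · refine ⟨b, -ε, a ⊔ b, ε, hb, ?_, by simp [hε], abs_of_nonneg hε, ?_⟩
      · simp [L₁, Set.mem_uIcc, hε, hba', hb']
      · ext p
        simp only [L₁, exchange, Pi.add_apply, Pi.smul_apply, Pi.sub_apply, smul_eq_mul,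
          Pi.single_apply]
        split_ifs <;> ring
    · refine ⟨a ⊔ b, ε, b, -ε, hsup, ?_, abs_of_nonneg hε, by simp [hε], ?_⟩
      · simp [L₁, Set.mem_uIcc, hε, hsupa, hsup']
      · ext p
        simp only [L₁, exchange, Pi.add_apply, Pi.smul_apply, Pi.sub_apply, smul_eq_mul,
          Pi.single_apply]
        split_ifs <;> ring
  rw [hL]
  linarith [sum_abs_add_single_le (G := G) (L₁ + Pi.single c s + Pi.single (a ⊓ b) ε) d t,
    sum_abs_add_single_le (G := G) (L₁ + Pi.single c s) (a ⊓ b) ε,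
    sum_abs_add_single_of_neg_mem_uIcc hc hs, abs_of_nonneg hε]

end Lattice

section Cube

def uncurry₃ (f : ℝ → ℝ → ℝ → ℝ) (p : ℝ × ℝ × ℝ) : ℝ := f p.1 p.2.1 p.2.2

theorem lt_of_strictMonoOn₂ {g : ℝ → ℝ → ℝ} {I : Set ℝ} (h₁ : ∀ w ∈ I, StrictMonoOn (g · w) I)
    (h₂ : ∀ v ∈ I, StrictMonoOn (g v) I) {v v' w w' : ℝ} (hv : v ∈ I) (hv' : v' ∈ I) (hw : w ∈ I)
    (hw' : w' ∈ I) (hvv' : v ≤ v') (hww' : w ≤ w') (hlt : v < v' ∨ w < w') : g v w < g v' w' := by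
  rcases hlt with hlt | hlt
  · exact (h₁ w hw hv hv' hlt).trans_le ((h₂ v' hv').monotoneOn hw hw' hww')
  · exact ((h₁ w hw).monotoneOn hv hv' hvv').trans_lt (h₂ v' hv' hw hw' hlt)

variable {f : ℝ → ℝ → ℝ → ℝ}

theorem StrictMixed.increment_fst_lt (hf : StrictMixed f) {u u' v v' w w' : ℝ}
    (hu : u ∈ Icc (0:ℝ) 1) (hu' : u' ∈ Icc (0:ℝ) 1) (hv : v ∈ Icc (0:ℝ) 1)
    (hv' : v' ∈ Icc (0:ℝ) 1) (hw : w ∈ Icc (0:ℝ) 1) (hw' : w' ∈ Icc (0:ℝ) 1) (huu' : u < u')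
    (hvv' : v ≤ v') (hww' : w ≤ w') (hlt : v < v' ∨ w < w') :
    f u' v w - f u v w < f u' v' w' - f u v' w' :=
  lt_of_strictMonoOn₂ (g := fun v w => f u' v w - f u v w)
    (fun w hw v hv v' hv' h => by linarith [hf.1 u u' v v' w hu hu' hv hv' hw huu' h])
    (fun v hv w hw w' hw' h => by linarith [hf.2.1 u u' w w' v hu hu' hw hw' hv huu' h])
    hv hv' hw hw' hvv' hww' hlt

theorem StrictMixed.increment_snd_lt (hf : StrictMixed f) {u u' v v' w w' : ℝ}
    (hu : u ∈ Icc (0:ℝ) 1) (hu' : u' ∈ Icc (0:ℝ) 1) (hv : v ∈ Icc (0:ℝ) 1)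
    (hv' : v' ∈ Icc (0:ℝ) 1) (hw : w ∈ Icc (0:ℝ) 1) (hw' : w' ∈ Icc (0:ℝ) 1) (hvv' : v < v')
    (huu' : u ≤ u') (hww' : w ≤ w') (hlt : u < u' ∨ w < w') :
    f u v' w - f u v w < f u' v' w' - f u' v w' :=
  lt_of_strictMonoOn₂ (g := fun u w => f u v' w - f u v w)
    (fun w hw u hu u' hu' h => by linarith [hf.1 u u' v v' w hu hu' hv hv' hw h hvv'])
    (fun u hu w hw w' hw' h => by linarith [hf.2.2 v v' w w' u hv hv' hw hw' hu hvv' h])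
    hu hu' hw hw' huu' hww' hlt

theorem StrictMixed.increment_thd_lt (hf : StrictMixed f) {u u' v v' w w' : ℝ}
    (hu : u ∈ Icc (0:ℝ) 1) (hu' : u' ∈ Icc (0:ℝ) 1) (hv : v ∈ Icc (0:ℝ) 1)
    (hv' : v' ∈ Icc (0:ℝ) 1) (hw : w ∈ Icc (0:ℝ) 1) (hw' : w' ∈ Icc (0:ℝ) 1) (hww' : w < w')
    (huu' : u ≤ u') (hvv' : v ≤ v') (hlt : u < u' ∨ v < v') :
    f u v w' - f u v w < f u' v' w' - f u' v' w :=
  lt_of_strictMonoOn₂ (g := fun u v => f u v w' - f u v w)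
    (fun v hv u hu u' hu' h => by linarith [hf.2.1 u u' w w' v hu hu' hw hw' hv h hww'])
    (fun u hu v hv v' hv' h => by linarith [hf.2.2 v v' w w' u hv hv' hw hw' hu h hww'])
    hu hu' hv hv' huu' hvv' hlt

theorem StrictMixed.add_lt_inf_add_sup (hf : StrictMixed f) {a b : ℝ × ℝ × ℝ}
    (ha : a ∈ Set.Icc 0 1) (hb : b ∈ Set.Icc 0 1) (hab : ¬a ≤ b) (hba : ¬b ≤ a) :
    uncurry₃ f a + uncurry₃ f b < uncurry₃ f (a ⊓ b) + uncurry₃ f (a ⊔ b) := by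
  wlog h₁ : b.1 ≤ a.1 generalizing a b
  · have := this hb ha hba hab (le_of_not_ge h₁)
    rwa [add_comm, inf_comm, sup_comm]
  obtain ⟨a₁, a₂, a₃⟩ := a
  obtain ⟨b₁, b₂, b₃⟩ := b
  obtain ⟨⟨ha₁, ha₂, ha₃⟩, ha₁', ha₂', ha₃'⟩ := ha
  obtain ⟨⟨hb₁, hb₂, hb₃⟩, hb₁', hb₂', hb₃'⟩ := hb
  simp only [Prod.mk_le_mk, not_and_or, not_le] at hab hba h₁
  simp only [uncurry₃, Prod.mk_inf_mk, Prod.mk_sup_mk]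
  have mem (t : ℝ) (h₀ : 0 ≤ t) (h₁ : t ≤ 1) : t ∈ Icc (0:ℝ) 1 := ⟨h₀, h₁⟩
  rcases le_total a₂ b₂ with h₂ | h₂ <;> rcases le_total a₃ b₃ with h₃ | h₃
  · rw [inf_eq_right.2 h₁, inf_eq_left.2 h₂, inf_eq_left.2 h₃, sup_eq_left.2 h₁,
      sup_eq_right.2 h₂, sup_eq_right.2 h₃]
    have := hf.increment_fst_lt (mem _ hb₁ hb₁') (mem _ ha₁ ha₁') (mem _ ha₂ ha₂') (mem _ hb₂ hb₂')
      (mem _ ha₃ ha₃') (mem _ hb₃ hb₃') (by rcases hab with h | h | h <;> linarith) h₂ h₃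
      (hba.resolve_left h₁.not_gt)
    linarith
  · rw [inf_eq_right.2 h₁, inf_eq_left.2 h₂, inf_eq_right.2 h₃, sup_eq_left.2 h₁,
      sup_eq_right.2 h₂, sup_eq_left.2 h₃]
    have := hf.increment_snd_lt (mem _ hb₁ hb₁') (mem _ ha₁ ha₁') (mem _ ha₂ ha₂') (mem _ hb₂ hb₂')
      (mem _ hb₃ hb₃') (mem _ ha₃ ha₃') (by rcases hba with h | h | h <;> linarith) h₁ h₃
      (hab.imp_right (Or.resolve_left · h₂.not_gt))
    linarith
  · rw [inf_eq_right.2 h₁, inf_eq_right.2 h₂, inf_eq_left.2 h₃, sup_eq_left.2 h₁,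
      sup_eq_left.2 h₂, sup_eq_right.2 h₃]
    have := hf.increment_thd_lt (mem _ hb₁ hb₁') (mem _ ha₁ ha₁') (mem _ hb₂ hb₂') (mem _ ha₂ ha₂')
      (mem _ ha₃ ha₃') (mem _ hb₃ hb₃') (by rcases hba with h | h | h <;> linarith) h₁ h₂
      (hab.imp_right (Or.resolve_right · h₃.not_gt))
    linarith
  · rcases hba with h | h | h <;> linarith

end Cube

section Grid

variable {Sx Sy Sz : Finset ℝ}

theorem inf_mem_product {a b : ℝ × ℝ × ℝ} (ha : a ∈ Sx ×ˢ Sy ×ˢ Sz) (hb : b ∈ Sx ×ˢ Sy ×ˢ Sz) :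
    a ⊓ b ∈ Sx ×ˢ Sy ×ˢ Sz := by
  simp only [mem_product] at *
  exact ⟨min_rec' _ ha.1 hb.1, min_rec' _ ha.2.1 hb.2.1, min_rec' _ ha.2.2 hb.2.2⟩

theorem sup_mem_product {a b : ℝ × ℝ × ℝ} (ha : a ∈ Sx ×ˢ Sy ×ˢ Sz) (hb : b ∈ Sx ×ˢ Sy ×ˢ Sz) :
    a ⊔ b ∈ Sx ×ˢ Sy ×ˢ Sz := by
  simp only [mem_product] at *
  exact ⟨max_rec' _ ha.1 hb.1, max_rec' _ ha.2.1 hb.2.1, max_rec' _ ha.2.2 hb.2.2⟩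

theorem coe_product_subset_Icc (hSx : (Sx : Set ℝ) ⊆ Icc 0 1) (hSy : (Sy : Set ℝ) ⊆ Icc 0 1)
    (hSz : (Sz : Set ℝ) ⊆ Icc 0 1) : ↑(Sx ×ˢ Sy ×ˢ Sz) ⊆ Set.Icc (0 : ℝ × ℝ × ℝ) 1 := by
  intro p hp
  simp only [coe_product, Set.mem_prod, mem_coe] at hp
  exact ⟨⟨(hSx hp.1).1, (hSy hp.2.1).1, (hSz hp.2.2).1⟩,
    ⟨(hSx hp.1).2, (hSy hp.2.1).2, (hSz hp.2.2).2⟩⟩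

def IsProjCycleOn (G : Finset (ℝ × ℝ × ℝ)) (w : ℝ × ℝ × ℝ → ℝ) : Prop :=
  FiberSumsVanish G Prod.fst w ∧ FiberSumsVanish G (fun p => p.2.1) w ∧
    FiberSumsVanish G (fun p => p.2.2) w

theorem IsProjCycleOn.add_smul {G : Finset (ℝ × ℝ × ℝ)} {w ν : ℝ × ℝ × ℝ → ℝ}
    (hw : IsProjCycleOn G w) (hν : IsProjCycleOn G ν) (c : ℝ) : IsProjCycleOn G (w + c • ν) :=
  ⟨hw.1.add_smul hν.1 c, hw.2.1.add_smul hν.2.1 c, hw.2.2.add_smul hν.2.2 c⟩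

theorem isProjCycleOn_exchange {a b : ℝ × ℝ × ℝ} (ha : a ∈ Sx ×ˢ Sy ×ˢ Sz)
    (hb : b ∈ Sx ×ˢ Sy ×ˢ Sz) : IsProjCycleOn (Sx ×ˢ Sy ×ˢ Sz) (exchange a b) := by
  have hinf := inf_mem_product ha hb
  have hsup := sup_mem_product ha hb
  exact ⟨fiberSumsVanish_exchange (fun _ _ => rfl) (fun _ _ => rfl) ha hb hinf hsup,
    fiberSumsVanish_exchange (fun _ _ => rfl) (fun _ _ => rfl) ha hb hinf hsup,
    fiberSumsVanish_exchange (fun _ _ => rfl) (fun _ _ => rfl) ha hb hinf hsup⟩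

noncomputable def cycleRatio (G : Finset (ℝ × ℝ × ℝ)) (F w : ℝ × ℝ × ℝ → ℝ) : ℝ :=
  (∑ p ∈ G, w p * F p) / ∑ p ∈ G, |w p|

def IsOptimalCycleOn (G : Finset (ℝ × ℝ × ℝ)) (F L : ℝ × ℝ × ℝ → ℝ) : Prop :=
  IsProjCycleOn G L ∧ ∀ w, IsProjCycleOn G w → cycleRatio G F w ≤ cycleRatio G F L

theorem sum_abs_ne_zero_of_cycleRatio_ne_zero {G : Finset (ℝ × ℝ × ℝ)} {F w : ℝ × ℝ × ℝ → ℝ}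
    (h : cycleRatio G F w ≠ 0) : ∑ p ∈ G, |w p| ≠ 0 :=
  fun h₀ => h (by rw [cycleRatio, h₀, div_zero])

theorem IsOptimalCycleOn.sum_mul_le {G : Finset (ℝ × ℝ × ℝ)} {F L w : ℝ × ℝ × ℝ → ℝ}
    (hL : IsOptimalCycleOn G F L) (hw : IsProjCycleOn G w) :
    ∑ p ∈ G, w p * F p ≤ cycleRatio G F L * ∑ p ∈ G, |w p| := by
  rcases eq_or_ne (∑ p ∈ G, |w p|) 0 with h₀ | h₀
  · have hw₀ : ∀ p ∈ G, w p = 0 := fun p hp =>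
      abs_eq_zero.1 ((sum_eq_zero_iff_of_nonneg fun _ _ => abs_nonneg _).1 h₀ p hp)
    rw [h₀, mul_zero]
    exact (sum_eq_zero fun p hp => by rw [hw₀ p hp, zero_mul]).le
  · have hpos := lt_of_le_of_ne (sum_nonneg fun p _ => abs_nonneg (w p)) h₀.symm
    exact (div_le_iff₀ hpos).1 (hL.2 w hw)

variable {f : ℝ → ℝ → ℝ → ℝ} {L : ℝ × ℝ × ℝ → ℝ}

theorem IsOptimalCycleOn.cycleRatio_pos (hf : StrictMixed f)
    (hS : ↑(Sx ×ˢ Sy ×ˢ Sz) ⊆ Set.Icc (0 : ℝ × ℝ × ℝ) 1)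
    (h01 : ({0, 1} : Finset ℝ) ⊆ Sx ∩ Sy ∩ Sz)
    (hL : IsOptimalCycleOn (Sx ×ˢ Sy ×ˢ Sz) (uncurry₃ f) L) :
    0 < cycleRatio (Sx ×ˢ Sy ×ˢ Sz) (uncurry₃ f) L := by
  have h₀ : (0 : ℝ) ∈ Sx ∩ Sy ∩ Sz := h01 (by simp)
  have h₁ : (1 : ℝ) ∈ Sx ∩ Sy ∩ Sz := h01 (by simp)
  simp only [Finset.mem_inter] at h₀ h₁
  have ha : ((1, 0, 0) : ℝ × ℝ × ℝ) ∈ Sx ×ˢ Sy ×ˢ Sz := by simp [h₀, h₁]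
  have hb : ((0, 1, 0) : ℝ × ℝ × ℝ) ∈ Sx ×ˢ Sy ×ˢ Sz := by simp [h₀, h₁]
  have hgain := hf.add_lt_inf_add_sup (hS ha) (hS hb) (by simp) (by simp)
  have hle := hL.sum_mul_le (isProjCycleOn_exchange ha hb)
  rw [sum_exchange_mul _ ha hb (inf_mem_product ha hb) (sup_mem_product ha hb)] at hle
  exact pos_of_mul_pos_left (by linarith) (sum_nonneg fun _ _ => abs_nonneg _)

end Grid

section Optimal

variable {Sx Sy Sz : Finset ℝ} {f : ℝ → ℝ → ℝ → ℝ} {L : ℝ × ℝ × ℝ → ℝ}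

theorem IsOptimalCycleOn.lt_sum_abs_add_smul_exchange (hf : StrictMixed f)
    (hS : ↑(Sx ×ˢ Sy ×ˢ Sz) ⊆ Set.Icc (0 : ℝ × ℝ × ℝ) 1)
    (hL : IsOptimalCycleOn (Sx ×ˢ Sy ×ˢ Sz) (uncurry₃ f) L)
    (hM : 0 < cycleRatio (Sx ×ˢ Sy ×ˢ Sz) (uncurry₃ f) L) {a b : ℝ × ℝ × ℝ}
    (ha : a ∈ Sx ×ˢ Sy ×ˢ Sz) (hb : b ∈ Sx ×ˢ Sy ×ˢ Sz) (hab : ¬a ≤ b) (hba : ¬b ≤ a) {ε : ℝ}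
    (hε : 0 < ε) :
    ∑ p ∈ Sx ×ˢ Sy ×ˢ Sz, |L p| < ∑ p ∈ Sx ×ˢ Sy ×ˢ Sz, |(L + ε • exchange a b) p| := by
  by_contra! hle
  have hLF : ∑ p ∈ Sx ×ˢ Sy ×ˢ Sz, L p * uncurry₃ f p =
      cycleRatio (Sx ×ˢ Sy ×ˢ Sz) (uncurry₃ f) L * ∑ p ∈ Sx ×ˢ Sy ×ˢ Sz, |L p| := by
    rw [cycleRatio, div_mul_cancel₀ _ (sum_abs_ne_zero_of_cycleRatio_ne_zero hM.ne')]
  have hgain := hf.add_lt_inf_add_sup (hS ha) (hS hb) hab hba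
  have hw := hL.sum_mul_le (hL.1.add_smul (isProjCycleOn_exchange ha hb) ε)
  have hsum : ∑ p ∈ Sx ×ˢ Sy ×ˢ Sz, (L + ε • exchange a b) p * uncurry₃ f p =
      ∑ p ∈ Sx ×ˢ Sy ×ˢ Sz, L p * uncurry₃ f p + ε * (uncurry₃ f (a ⊓ b) + uncurry₃ f (a ⊔ b) -
        uncurry₃ f a - uncurry₃ f b) := by
    simp only [Pi.add_apply, Pi.smul_apply, smul_eq_mul, add_mul, mul_assoc, sum_add_distrib,
      ← mul_sum, sum_exchange_mul _ ha hb (inf_mem_product ha hb) (sup_mem_product ha hb)]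
  rw [hsum] at hw
  linarith [mul_le_mul_of_nonneg_left hle hM.le, mul_pos hε (sub_pos.2 hgain)]

theorem IsOptimalCycleOn.le_total_of_pos (hf : StrictMixed f)
    (hS : ↑(Sx ×ˢ Sy ×ˢ Sz) ⊆ Set.Icc (0 : ℝ × ℝ × ℝ) 1)
    (hL : IsOptimalCycleOn (Sx ×ˢ Sy ×ˢ Sz) (uncurry₃ f) L)
    (hM : 0 < cycleRatio (Sx ×ˢ Sy ×ˢ Sz) (uncurry₃ f) L) {p q : ℝ × ℝ × ℝ}
    (hp : p ∈ Sx ×ˢ Sy ×ˢ Sz) (hq : q ∈ Sx ×ˢ Sy ×ˢ Sz) (hLp : 0 < L p) (hLq : 0 < L q) :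
    p ≤ q ∨ q ≤ p := by
  by_contra! h
  have hε := lt_min hLp hLq
  exact (hL.lt_sum_abs_add_smul_exchange hf hS hM hp hq h.1 h.2 hε).not_ge
    (sum_abs_add_smul_exchange_le hp hq (sup_mem_product hp hq) h.2 hε.le (min_le_left _ _)
      (Or.inl (min_le_right _ _)))

theorem IsOptimalCycleOn.false_of_apply_sup_neg (hf : StrictMixed f)
    (hS : ↑(Sx ×ˢ Sy ×ˢ Sz) ⊆ Set.Icc (0 : ℝ × ℝ × ℝ) 1)
    (hL : IsOptimalCycleOn (Sx ×ˢ Sy ×ˢ Sz) (uncurry₃ f) L)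
    (hM : 0 < cycleRatio (Sx ×ˢ Sy ×ˢ Sz) (uncurry₃ f) L) {p r : ℝ × ℝ × ℝ}
    (hp : p ∈ Sx ×ˢ Sy ×ˢ Sz) (hr : r ∈ Sx ×ˢ Sy ×ˢ Sz) (hpr : ¬p ≤ r) (hLp : 0 < L p)
    (hLpr : L (p ⊔ r) < 0) : False := by
  have hrp : ¬r ≤ p := fun h => by rw [sup_eq_left.2 h] at hLpr; linarith
  have hε : 0 < min (L p) (-L (p ⊔ r)) := lt_min hLp (neg_pos.2 hLpr)
  exact (hL.lt_sum_abs_add_smul_exchange hf hS hM hp hr hpr hrp hε).not_ge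
    (sum_abs_add_smul_exchange_le hp hr (sup_mem_product hp hr) hrp hε.le (min_le_left _ _)
      (Or.inr (le_neg.1 (min_le_right _ _))))

theorem IsOptimalCycleOn.exists_least_pos (hf : StrictMixed f)
    (hS : ↑(Sx ×ˢ Sy ×ˢ Sz) ⊆ Set.Icc (0 : ℝ × ℝ × ℝ) 1)
    (hL : IsOptimalCycleOn (Sx ×ˢ Sy ×ˢ Sz) (uncurry₃ f) L)
    (hM : 0 < cycleRatio (Sx ×ˢ Sy ×ˢ Sz) (uncurry₃ f) L) :
    ∃ p ∈ Sx ×ˢ Sy ×ˢ Sz, 0 < L p ∧ ∀ q ∈ Sx ×ˢ Sy ×ˢ Sz, L q ≠ 0 → p ≤ q := by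
  set G := Sx ×ˢ Sy ×ˢ Sz
  obtain ⟨q, hq, hLq⟩ := exists_ne_zero_of_sum_ne_zero
    (sum_abs_ne_zero_of_cycleRatio_ne_zero hM.ne')
  obtain ⟨q', hq', -, hLq'⟩ := hL.1.1.exists_pos hq (abs_ne_zero.1 hLq)
  obtain ⟨p, hp⟩ := (G.filter (0 < L ·)).exists_minimal ⟨q', mem_filter.2 ⟨hq', hLq'⟩⟩
  obtain ⟨hpG, hLp⟩ := mem_filter.1 hp.prop
  have hle_pos : ∀ q ∈ G, 0 < L q → p ≤ q := fun q hq hLq =>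
    (hL.le_total_of_pos hf hS hM hpG hq hLp hLq).elim id
      fun hqp => (hp.eq_of_le (mem_filter.2 ⟨hq, hLq⟩) hqp).ge
  -- every plane through a support point also contains a point of positive weight
  refine ⟨p, hpG, hLp, fun q hq hLq => ⟨?_, ?_, ?_⟩⟩
  · obtain ⟨q', hq', hπ, hLq'⟩ := hL.1.1.exists_pos hq hLq
    exact hπ ▸ (hle_pos q' hq' hLq').1
  · obtain ⟨q', hq', hπ, hLq'⟩ := hL.1.2.1.exists_pos hq hLq
    exact hπ ▸ (hle_pos q' hq' hLq').2.1
  · obtain ⟨q', hq', hπ, hLq'⟩ := hL.1.2.2.exists_pos hq hLq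
    exact hπ ▸ (hle_pos q' hq' hLq').2.2

theorem IsOptimalCycleOn.apply_zero_pos (hf : StrictMixed f)
    (hS : ↑(Sx ×ˢ Sy ×ˢ Sz) ⊆ Set.Icc (0 : ℝ × ℝ × ℝ) 1)
    (h01 : ({0, 1} : Finset ℝ) ⊆ Sx ∩ Sy ∩ Sz)
    (hL : IsOptimalCycleOn (Sx ×ˢ Sy ×ˢ Sz) (uncurry₃ f) L) : 0 < L 0 := by
  have hM := hL.cycleRatio_pos hf hS h01
  obtain ⟨p, hpG, hLp, hleast⟩ := hL.exists_least_pos hf hS hM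
  have h₀ : (0 : ℝ) ∈ Sx ∩ Sy ∩ Sz := h01 (by simp)
  simp only [Finset.mem_inter] at h₀
  have hp₀ : 0 ≤ p := (hS hpG).1
  suffices p = 0 by rwa [← this]
  by_contra hne
  have hcoord : 0 < p.1 ∨ 0 < p.2.1 ∨ 0 < p.2.2 := by
    by_contra! h
    exact hne (le_antisymm (show p ≤ 0 from ⟨h.1, h.2.1, h.2.2⟩) hp₀)
  -- Exchange `p` with the point `r` obtained from a negative point `q` in a plane through `p` by
  -- moving `q` to the parallel plane through `0`: then `p ⊔ r = q`.
  rcases hcoord with h | h | h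
  · obtain ⟨q, hq, hqp, hLq⟩ := hL.1.1.exists_neg hpG hLp.ne'
    have hpq := hleast q hq hLq.ne
    refine hL.false_of_apply_sup_neg hf hS hM hpG (r := (0, q.2.1, q.2.2))
      (by simp only [mem_product] at hq ⊢; exact ⟨h₀.1.1, hq.2⟩)
      (fun hle => h.not_ge hle.1) hLp ?_
    convert hLq using 2
    ext <;> simp [hqp, h.le, hpq.2.1, hpq.2.2]
  · obtain ⟨q, hq, hqp, hLq⟩ := hL.1.2.1.exists_neg hpG hLp.ne'
    have hpq := hleast q hq hLq.ne
    refine hL.false_of_apply_sup_neg hf hS hM hpG (r := (q.1, 0, q.2.2))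
      (by simp only [mem_product] at hq ⊢; exact ⟨hq.1, h₀.1.2, hq.2.2⟩)
      (fun hle => h.not_ge hle.2.1) hLp ?_
    convert hLq using 2
    ext <;> simp [hqp, h.le, hpq.1, hpq.2.2]
  · obtain ⟨q, hq, hqp, hLq⟩ := hL.1.2.2.exists_neg hpG hLp.ne'
    have hpq := hleast q hq hLq.ne
    refine hL.false_of_apply_sup_neg hf hS hM hpG (r := (q.1, q.2.1, 0))
      (by simp only [mem_product] at hq ⊢; exact ⟨hq.1, hq.2.1, h₀.2⟩)
      (fun hle => h.not_ge hle.2.2) hLp ?_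
    convert hLq using 2
    ext <;> simp [hqp, h.le, hpq.1, hpq.2.1]

end Optimal

section Representation

variable {α : Type*} {G : Finset α} {n : ℕ} {x : Fin n → α} {lam : Fin n → ℝ} {w : α → ℝ}

def RepresentsOn (G : Finset α) (x : Fin n → α) (lam : Fin n → ℝ) (w : α → ℝ) : Prop :=
  ∀ φ : α → ℝ → ℝ, (∀ p, φ p 0 = 0) → ∑ i, φ (x i) (lam i) = ∑ p ∈ G, φ p (w p)

theorem representsOn_extend [DecidableEq α] (hx : Function.Injective x) (hG : ∀ i, x i ∈ G) :
    RepresentsOn G x lam (Function.extend x lam 0) := by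
  intro φ hφ
  have hsub : Finset.image x univ ⊆ G := fun p hp => by
    obtain ⟨i, -, rfl⟩ := mem_image.1 hp
    exact hG i
  rw [← sum_subset hsub fun p _ hp => ?_, sum_image fun i _ j _ h => hx h]
  · simp only [hx.extend_apply]
  · rw [Function.extend_apply' _ _ _ fun ⟨i, hi⟩ => hp (mem_image.2 ⟨i, mem_univ i, hi⟩),
      Pi.zero_apply, hφ]

theorem exists_representsOn (G : Finset α) (w : α → ℝ) :
    ∃ (n : ℕ) (x : Fin n → α) (lam : Fin n → ℝ), Function.Injective x ∧ (∀ i, lam i ≠ 0) ∧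
      (∀ i, x i ∈ G) ∧ RepresentsOn G x lam w := by
  classical
  set T := G.filter (w · ≠ 0)
  have hT (i : Fin T.card) := mem_filter.1 (T.equivFin.symm i).2
  refine ⟨T.card, fun i => T.equivFin.symm i, fun i => w (T.equivFin.symm i),
    Subtype.val_injective.comp T.equivFin.symm.injective, fun i => (hT i).2, fun i => (hT i).1,
    fun φ hφ => ?_⟩
  rw [Equiv.sum_comp T.equivFin.symm (fun p => φ p (w p)), sum_coe_sort T (fun p => φ p (w p))]
  exact sum_filter_of_ne fun p _ h hw => h (by rw [hw, hφ])

end Representation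

section PCV

variable {m : ℕ} {x : Fin m → ℝ × ℝ × ℝ} {lam : Fin m → ℝ} {w : ℝ × ℝ × ℝ → ℝ}
  {G : Finset (ℝ × ℝ × ℝ)} {Sx Sy Sz : Finset ℝ} {f : ℝ → ℝ → ℝ → ℝ}

theorem RepresentsOn.fiberSums_eq (h : RepresentsOn G x lam w) (π : ℝ × ℝ × ℝ → ℝ) (ξ : ℝ) :
    ∑ i, (if π (x i) = ξ then lam i else 0) = ∑ p ∈ G with π p = ξ, w p := by
  rw [sum_filter]
  exact h (fun p a => if π p = ξ then a else 0) fun _ => ite_self 0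

theorem RepresentsOn.isPCV_iff (h : RepresentsOn G x lam w) :
    IsPCV m x lam ↔ Function.Injective x ∧ (∀ i, lam i ≠ 0) ∧ IsProjCycleOn G w := by
  simp only [IsPCV, IsProjCycleOn, FiberSumsVanish, h.fiberSums_eq Prod.fst,
    h.fiberSums_eq (fun p => p.2.1), h.fiberSums_eq (fun p => p.2.2)]

theorem RepresentsOn.pcvRatio_eq (h : RepresentsOn G x lam w) (f : ℝ → ℝ → ℝ → ℝ) :
    pcvRatio m x lam f = cycleRatio G (uncurry₃ f) w :=
  congrArg₂ (· / ·) (h (fun p a => a * uncurry₃ f p) fun _ => zero_mul _)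
    (h (fun _ a => |a|) fun _ => abs_zero)

theorem OptimalPCV.isOptimalCycleOn (hopt : OptimalPCV Sx Sy Sz f m x lam) :
    IsOptimalCycleOn (Sx ×ˢ Sy ×ˢ Sz) (uncurry₃ f) (Function.extend x lam 0) := by
  obtain ⟨hpcv, hpts, hmax⟩ := hopt
  have hmem {n : ℕ} {x : Fin n → ℝ × ℝ × ℝ} :
      PointsIn n x Sx Sy Sz ↔ ∀ i, x i ∈ Sx ×ˢ Sy ×ˢ Sz := by
    simp [PointsIn, mem_product]
  have hR := representsOn_extend (lam := lam) hpcv.1 (hmem.1 hpts)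
  refine ⟨(hR.isPCV_iff.1 hpcv).2.2, fun w hw => ?_⟩
  obtain ⟨n, x', lam', hinj, hne, hG, hR'⟩ := exists_representsOn (Sx ×ˢ Sy ×ˢ Sz) w
  rw [← hR.pcvRatio_eq, ← hR'.pcvRatio_eq]
  exact hmax n x' lam' (hR'.isPCV_iff.2 ⟨hinj, hne, hw⟩) (hmem.2 hG)

theorem OptimalPCV.exists_eq_zero_pos (hf : StrictMixed f) (hSx : (Sx : Set ℝ) ⊆ Icc 0 1)
    (hSy : (Sy : Set ℝ) ⊆ Icc 0 1) (hSz : (Sz : Set ℝ) ⊆ Icc 0 1)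
    (h01 : ({0, 1} : Finset ℝ) ⊆ Sx ∩ Sy ∩ Sz) (hopt : OptimalPCV Sx Sy Sz f m x lam) :
    ∃ i, x i = 0 ∧ 0 < lam i := by
  have hpos := hopt.isOptimalCycleOn.apply_zero_pos hf (coe_product_subset_Icc hSx hSy hSz) h01
  obtain ⟨i, hi⟩ : ∃ i, x i = 0 :=
    by_contra fun h => hpos.ne' (Function.extend_apply' _ _ _ h)
  rw [← hi, hopt.1.1.extend_apply] at hpos
  exact ⟨i, hi, hpos⟩

end PCV

section Reflection

variable {m : ℕ} {x : Fin m → ℝ × ℝ × ℝ} {lam : Fin m → ℝ} {f : ℝ → ℝ → ℝ → ℝ}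
  {Sx Sy Sz : Finset ℝ}

def reflectFun (f : ℝ → ℝ → ℝ → ℝ) : ℝ → ℝ → ℝ → ℝ := fun u v w => f (1 - u) (1 - v) (1 - w)

theorem StrictMixed.reflectFun (hf : StrictMixed f) : StrictMixed (reflectFun f) := by
  have h (t : ℝ) (ht : t ∈ Icc (0:ℝ) 1) : 1 - t ∈ Icc (0:ℝ) 1 := Set.Icc.mem_iff_one_sub_mem.1 ht
  refine ⟨fun u u' v v' w hu hu' hv hv' hw huu' hvv' => ?_,
    fun u u' w w' v hu hu' hw hw' hv huu' hww' => ?_,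
    fun v v' w w' u hv hv' hw hw' hu hvv' hww' => ?_⟩ <;> simp only [_root_.reflectFun]
  · linarith [hf.1 _ _ _ _ _ (h _ hu') (h _ hu) (h _ hv') (h _ hv) (h _ hw) (by linarith)
      (by linarith)]
  · linarith [hf.2.1 _ _ _ _ _ (h _ hu') (h _ hu) (h _ hw') (h _ hw) (h _ hv) (by linarith)
      (by linarith)]
  · linarith [hf.2.2 _ _ _ _ _ (h _ hv') (h _ hv) (h _ hw') (h _ hw) (h _ hu) (by linarith)
      (by linarith)]

theorem mem_image_one_sub {S : Finset ℝ} {t : ℝ} : t ∈ S.image (1 - ·) ↔ 1 - t ∈ S :=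
  ⟨fun h => by obtain ⟨s, hs, rfl⟩ := mem_image.1 h; rwa [sub_sub_cancel],
    fun h => mem_image.2 ⟨1 - t, h, sub_sub_cancel 1 t⟩⟩

theorem IsPCV.one_sub (h : IsPCV m x lam) : IsPCV m (fun i => 1 - x i) lam := by
  have hiff (a ξ : ℝ) : 1 - a = ξ ↔ a = 1 - ξ := by
    rw [sub_eq_iff_eq_add, eq_sub_iff_add_eq, add_comm, eq_comm]
  refine ⟨fun i j hij => h.1 (sub_right_injective hij), h.2.1, fun ξ => ?_, fun ξ => ?_,
    fun ξ => ?_⟩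
  · simpa [hiff] using h.2.2.1 (1 - ξ)
  · simpa [hiff] using h.2.2.2.1 (1 - ξ)
  · simpa [hiff] using h.2.2.2.2 (1 - ξ)

theorem pointsIn_one_sub_iff :
    PointsIn m (fun i => 1 - x i) (Sx.image (1 - ·)) (Sy.image (1 - ·)) (Sz.image (1 - ·)) ↔
      PointsIn m x Sx Sy Sz := by
  simp [PointsIn]

theorem OptimalPCV.one_sub (hopt : OptimalPCV Sx Sy Sz f m x lam) :
    OptimalPCV (Sx.image (1 - ·)) (Sy.image (1 - ·)) (Sz.image (1 - ·)) (reflectFun f) m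
      (fun i => 1 - x i) lam := by
  refine ⟨hopt.1.one_sub, pointsIn_one_sub_iff.2 hopt.2.1, fun n x' lam' hpcv hpts => ?_⟩
  have hpts' : PointsIn n (fun i => 1 - x' i) Sx Sy Sz :=
    pointsIn_one_sub_iff.1 (by simpa only [sub_sub_cancel] using hpts)
  have hratio := hopt.2.2 n _ lam' hpcv.one_sub hpts'
  simpa only [pcvRatio, reflectFun, Prod.fst_sub, Prod.snd_sub, Prod.fst_one, Prod.snd_one,
    sub_sub_cancel] using hratio

end Reflection

theorem stmt_7_general (f : ℝ → ℝ → ℝ → ℝ)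
    (hf : StrictMixed f)
    (Sx Sy Sz : Finset ℝ)
    (hSx : (Sx : Set ℝ) ⊆ Icc (0:ℝ) 1) (hSy : (Sy : Set ℝ) ⊆ Icc (0:ℝ) 1)
    (hSz : (Sz : Set ℝ) ⊆ Icc (0:ℝ) 1)
    (h01 : ({0, 1} : Finset ℝ) ⊆ Sx ∩ Sy ∩ Sz)
    (m : ℕ) (x : Fin m → ℝ × ℝ × ℝ) (lam : Fin m → ℝ)
    (hopt : OptimalPCV Sx Sy Sz f m x lam) :
    (∃ i : Fin m, x i = ((0:ℝ), (0:ℝ), (0:ℝ)) ∧ 0 < lam i) ∧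
    (∃ j : Fin m, x j = ((1:ℝ), (1:ℝ), (1:ℝ)) ∧ 0 < lam j) := by
  refine ⟨hopt.exists_eq_zero_pos hf hSx hSy hSz h01, ?_⟩
  have hS' {S : Finset ℝ} (hS : (S : Set ℝ) ⊆ Icc 0 1) : ↑(S.image (1 - ·)) ⊆ Icc (0:ℝ) 1 :=
    fun t ht => Set.Icc.mem_iff_one_sub_mem.2 (hS (mem_image_one_sub.1 ht))
  have h01' : ({0, 1} : Finset ℝ) ⊆ Sx.image (1 - ·) ∩ Sy.image (1 - ·) ∩ Sz.image (1 - ·) := by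
    intro t ht
    have h : 1 - t ∈ ({0, 1} : Finset ℝ) := by
      rcases mem_insert.1 ht with rfl | ht
      · simp
      · simp [mem_singleton.1 ht]
    simpa only [Finset.mem_inter, mem_image_one_sub] using h01 h
  obtain ⟨j, hj, hpos⟩ :=
    hopt.one_sub.exists_eq_zero_pos hf.reflectFun (hS' hSx) (hS' hSy) (hS' hSz) h01'
  exact ⟨j, (sub_eq_zero.1 hj).symm, hpos⟩

theorem stmt_7 (f : ℝ → ℝ → ℝ → ℝ)
    (hcont : ContinuousOn (fun p : ℝ × ℝ × ℝ => f p.1 p.2.1 p.2.2)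
      (Icc (0:ℝ) 1 ×ˢ Icc (0:ℝ) 1 ×ˢ Icc (0:ℝ) 1))
    (hf : StrictMixed f)
    (Sx Sy Sz : Finset ℝ)
    (hSx : (Sx : Set ℝ) ⊆ Icc (0:ℝ) 1) (hSy : (Sy : Set ℝ) ⊆ Icc (0:ℝ) 1)
    (hSz : (Sz : Set ℝ) ⊆ Icc (0:ℝ) 1)
    (h01 : ({0, 1} : Finset ℝ) ⊆ Sx ∩ Sy ∩ Sz)
    (m : ℕ) (x : Fin m → ℝ × ℝ × ℝ) (lam : Fin m → ℝ)
    (hopt : OptimalPCV Sx Sy Sz f m x lam) :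
    (∃ i : Fin m, x i = ((0:ℝ), (0:ℝ), (0:ℝ)) ∧ 0 < lam i) ∧
    (∃ j : Fin m, x j = ((1:ℝ), (1:ℝ), (1:ℝ)) ∧ 0 < lam j) :=
  stmt_7_general f hf Sx Sy Sz hSx hSy hSz h01 m x lam hopt
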